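/- arXiv:2009.04729 — 3 statements merged into one kernel-verified Lean document; each statement's English description precedes it below -/
import Mathlib

section
/- Let T be a positive self-adjoint compact operator on a separable Hilbert space with eigenvalues τ_k satisfying τ_k ≤ c′ k^{-2r} for some c′ > 0 and r > 1/2. Then for every λ > 0, the effective dimension D(λ) = Tr((T + λI)^{-1} T) = Σ_{k≥1} τ_k/(τ_k + λ) satisfies D(λ) ≤ λ^{-1/(2r)} ∫₀^∞ c′/(c′ + s^{2r}) ds; in particular D(λ) ≤ C λ^{-1/(2r)} for a constant C depending only on c′ and r. -/
/-!
Since `x ↦ x / (x + λ)` is increasing, the eigenvalue bound gives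
`τ_k / (τ_k + λ) ≤ c' / (c' + λ k^{2r})`. The right side decreases in `k`, so the series is at most
`∫₀^∞ c' / (c' + λ s^{2r}) ds`, which is finite because `2r > 1`; the substitution
`t = λ^{1/(2r)} s` turns this integral into `λ^{-1/(2r)} ∫₀^∞ c' / (c' + t^{2r}) dt`.
-/

open MeasureTheory Set Finset

theorem AntitoneOn.summable_and_tsum_le_integral_Ioi {g : ℝ → ℝ} (hanti : AntitoneOn g (Ici 0))
    (hnonneg : ∀ x, 0 < x → 0 ≤ g x) (hint : IntegrableOn g (Ioi 0)) :
    Summable (fun k : ℕ => g (k + 1)) ∧ ∑' k : ℕ, g (k + 1) ≤ ∫ x in Ioi 0, g x := by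
  have hterm_nonneg : ∀ k : ℕ, 0 ≤ g (k + 1) := fun k => hnonneg _ (by positivity)
  have hpartial : ∀ n, ∑ k ∈ range n, g (k + 1) ≤ ∫ x in Ioi 0, g x := by
    intro n
    calc ∑ k ∈ range n, g (k + 1) ≤ ∫ x in (0 : ℝ)..n, g x := by
          simpa using (hanti.mono Icc_subset_Ici_self).sum_le_integral (x₀ := 0) (a := n)
      _ = ∫ x in Ioc 0 (n : ℝ), g x := intervalIntegral.integral_of_le n.cast_nonneg
      _ ≤ ∫ x in Ioi 0, g x :=
          setIntegral_mono_set hint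
            ((ae_restrict_iff' measurableSet_Ioi).2 (.of_forall hnonneg))
            Ioc_subset_Ioi_self.eventuallyLE
  exact ⟨summable_of_sum_range_le hterm_nonneg hpartial,
    Real.tsum_le_of_sum_range_le hterm_nonneg hpartial⟩

theorem antitoneOn_div_const_add_mul_rpow {c a p : ℝ} (hc : 0 < c) (ha : 0 ≤ a) (hp : 0 ≤ p) :
    AntitoneOn (fun t : ℝ => c / (c + a * t ^ p)) (Ici 0) := by
  intro s hs t _ hst
  have hsp : 0 ≤ a * s ^ p := mul_nonneg ha (Real.rpow_nonneg hs p)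
  have : a * s ^ p ≤ a * t ^ p := by gcongr
  exact div_le_div_of_nonneg_left hc.le (by linarith) (by linarith)

theorem integrableOn_Ioi_div_const_add_mul_rpow {c a p : ℝ} (hc : 0 < c) (ha : 0 < a)
    (hp : 1 < p) : IntegrableOn (fun t : ℝ => c / (c + a * t ^ p)) (Ioi 0) := by
  have hmeas : AEStronglyMeasurable (fun t : ℝ => c / (c + a * t ^ p)) :=
    (by fun_prop : Measurable fun t : ℝ => c / (c + a * t ^ p)).aestronglyMeasurable
  have hden : ∀ t : ℝ, 0 < t → 0 < a * t ^ p ∧ 0 < c + a * t ^ p := fun t ht =>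
    have : 0 < a * t ^ p := by positivity
    ⟨this, by linarith⟩
  have hnorm : ∀ t : ℝ, 0 < t → ‖c / (c + a * t ^ p)‖ = c / (c + a * t ^ p) := fun t ht =>
    Real.norm_of_nonneg (div_nonneg hc.le (hden t ht).2.le)
  have hnear : IntegrableOn (fun t : ℝ => c / (c + a * t ^ p)) (Ioc 0 1) := by
    refine Integrable.mono' (integrable_const (1 : ℝ)) hmeas.restrict
      ((ae_restrict_iff' measurableSet_Ioc).2 (.of_forall fun t ht => ?_))
    obtain ⟨htp, hct⟩ := hden t ht.1
    rw [hnorm t ht.1, div_le_one hct]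
    linarith
  have hfar : IntegrableOn (fun t : ℝ => c / (c + a * t ^ p)) (Ioi 1) := by
    refine Integrable.mono'
      ((integrableOn_Ioi_rpow_of_lt (neg_lt_neg hp) one_pos).const_mul (c / a))
      hmeas.restrict ((ae_restrict_iff' measurableSet_Ioi).2 (.of_forall fun t ht => ?_))
    have ht0 : 0 < t := one_pos.trans ht
    obtain ⟨htp, hct⟩ := hden t ht0
    rw [hnorm t ht0, Real.rpow_neg ht0.le, ← div_eq_mul_inv, div_div]
    exact div_le_div_of_nonneg_left hc.le htp (by linarith)
  simpa only [Ioc_union_Ioi_eq_Ioi zero_le_one] using hnear.union hfar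

theorem integral_Ioi_div_const_add_mul_rpow {c a p : ℝ} (ha : 0 < a) (hp : p ≠ 0) :
    ∫ t in Ioi 0, c / (c + a * t ^ p) = a ^ (-(1 / p)) * ∫ t in Ioi 0, c / (c + t ^ p) := by
  set b := a ^ (1 / p) with hb_def
  have hb : 0 < b := Real.rpow_pos_of_pos ha _
  have hscale : ∀ t ∈ Ioi (0 : ℝ), c / (c + a * t ^ p) = c / (c + (b * t) ^ p) := by
    intro t ht
    rw [Real.mul_rpow hb.le (le_of_lt ht), hb_def, one_div, Real.rpow_inv_rpow ha.le hp]
  rw [setIntegral_congr_fun measurableSet_Ioi hscale,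
    integral_comp_mul_left_Ioi (fun s => c / (c + s ^ p)) 0 hb, mul_zero, smul_eq_mul,
    Real.rpow_neg ha.le]

theorem div_add_le_div_add_mul_rpow {τ c lam n p : ℝ} (hτ0 : 0 ≤ τ) (hc : 0 < c) (hlam : 0 < lam)
    (hn : 0 < n) (hτ : τ ≤ c * n ^ (-p)) : τ / (τ + lam) ≤ c / (c + lam * n ^ p) := by
  have hnp : 0 < n ^ p := Real.rpow_pos_of_pos hn p
  have hτnp : τ * n ^ p ≤ c := by
    rwa [Real.rpow_neg hn.le, ← div_eq_mul_inv, le_div_iff₀ hnp] at hτ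
  rw [div_le_div_iff₀ (by positivity) (by positivity)]
  nlinarith

/-- If the eigenvalues of a positive trace-class operator satisfy `τ_k ≤ c' k^{-2r}` with
`r > 1/2`, then the effective dimension `D(λ) = Σ_k τ_k/(τ_k+λ)` satisfies
`D(λ) ≤ λ^{-1/(2r)} ∫₀^∞ c'/(c'+s^{2r}) ds`; in particular `D(λ) ≤ C λ^{-1/(2r)}`
with `C` depending only on `c'` and `r`. -/
theorem stmt3 (τ : ℕ → ℝ) (c' r lam : ℝ) (hc' : 0 < c') (hr : 1 / 2 < r) (hlam : 0 < lam)
    (hτpos : ∀ k : ℕ, 1 ≤ k → 0 < τ k)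
    (hτ : ∀ k : ℕ, 1 ≤ k → τ k ≤ c' * (k : ℝ) ^ (-(2 * r))) :
    (∑' k : ℕ, τ (k + 1) / (τ (k + 1) + lam))
      ≤ lam ^ (-(1 / (2 * r))) * ∫ s in Set.Ioi (0 : ℝ), c' / (c' + s ^ (2 * r)) ∧
    ∃ C : ℝ, 0 < C ∧
      (∑' k : ℕ, τ (k + 1) / (τ (k + 1) + lam)) ≤ C * lam ^ (-(1 / (2 * r))) := by
  have hp : 1 < 2 * r := by linarith
  have hτk : ∀ k : ℕ, 0 < τ (k + 1) ∧ τ (k + 1) ≤ c' * ((k : ℝ) + 1) ^ (-(2 * r)) := fun k =>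
    ⟨hτpos (k + 1) (Nat.le_add_left 1 k), by exact_mod_cast hτ (k + 1) (Nat.le_add_left 1 k)⟩
  have hterm : ∀ k : ℕ,
      τ (k + 1) / (τ (k + 1) + lam) ≤ c' / (c' + lam * ((k : ℝ) + 1) ^ (2 * r)) := fun k =>
    div_add_le_div_add_mul_rpow (hτk k).1.le hc' hlam (by positivity) (hτk k).2
  obtain ⟨hsum, htsum⟩ :=
    (antitoneOn_div_const_add_mul_rpow hc' hlam.le (by linarith)).summable_and_tsum_le_integral_Ioi
      (fun x hx => by positivity) (integrableOn_Ioi_div_const_add_mul_rpow hc' hlam hp)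
  have hD_nonneg : ∀ k : ℕ, 0 ≤ τ (k + 1) / (τ (k + 1) + lam) := fun k =>
    have := (hτk k).1; by positivity
  have hD : (∑' k : ℕ, τ (k + 1) / (τ (k + 1) + lam))
      ≤ lam ^ (-(1 / (2 * r))) * ∫ s in Ioi 0, c' / (c' + s ^ (2 * r)) :=
    calc (∑' k : ℕ, τ (k + 1) / (τ (k + 1) + lam))
        ≤ ∑' k : ℕ, c' / (c' + lam * ((k : ℝ) + 1) ^ (2 * r)) :=
          (hsum.of_nonneg_of_le hD_nonneg hterm).tsum_le_tsum hterm hsum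
      _ ≤ ∫ s in Ioi 0, c' / (c' + lam * s ^ (2 * r)) := htsum
      _ = lam ^ (-(1 / (2 * r))) * ∫ s in Ioi 0, c' / (c' + s ^ (2 * r)) :=
          integral_Ioi_div_const_add_mul_rpow hlam (by linarith)
  refine ⟨hD, max (∫ s in Ioi 0, c' / (c' + s ^ (2 * r))) 1, by positivity, hD.trans ?_⟩
  rw [mul_comm]
  gcongr
  exact le_max_left _ _
end

section
/- Let T and T_n be positive self-adjoint bounded operators on a Hilbert space and λ > 0. Then ‖(T + λI)(T_n + λI)^{-1}‖_op ≤ ( λ^{-1/2} ‖(T + λI)^{-1/2}(T_n − T)‖_op + 1 )². -/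
/-!
Writing `e = Tₙ - T`, the resolvent identity gives
`(T + λ)(Tₙ + λ)⁻¹ = e S e Sₙ - e S + 1` with `S = R²`. Splitting `S = R R` puts a factor
`R e` (or its adjoint `e R`) next to each `e`, and the C⋆-identity `‖R‖² = ‖S‖ ≤ λ⁻¹`
bounds the remaining factor `R`, so the norm is at most `x²/λ + x/√λ + 1` with
`x = ‖R e‖`.
-/

open scoped RealInnerProductSpace

lemma mul_eq_sub_mul_sub_add_one {R : Type*} [Ring R] {a b s t : R} (hs : s * a = 1)
    (ht : b * t = 1) : a * t = (b - a) * s * (b - a) * t - (b - a) * s + 1 :=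
  calc a * t = 1 - (b - a) * t := by rw [sub_mul, ht, sub_sub_cancel]
    _ = (b - a) * s * (b * t) - (b - a) * (s * a) * t - (b - a) * s + 1 := by
      rw [hs, ht]; noncomm_ring
    _ = (b - a) * s * (b - a) * t - (b - a) * s + 1 := by noncomm_ring

section CStarRing

variable {A : Type*} [NormedRing A] [StarRing A] [CStarRing A]

lemma CStarRing.norm_one_le_one : ‖(1 : A)‖ ≤ 1 := by
  have h : ‖(1 : A)‖ = ‖(1 : A)‖ * ‖(1 : A)‖ := by
    simpa using CStarRing.norm_star_mul_self (x := (1 : A))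
  nlinarith [norm_nonneg (1 : A)]

lemma IsSelfAdjoint.norm_mul_comm {e r : A} (he : IsSelfAdjoint e) (hr : IsSelfAdjoint r) :
    ‖e * r‖ = ‖r * e‖ := by
  rw [← norm_star (r * e), star_mul, hr.star_eq, he.star_eq]

theorem norm_mul_le_sq_of_mul_eq_one {a b s t r : A} {c : ℝ} (hc : 0 < c)
    (hs : s * a = 1) (ht : b * t = 1) (hba : IsSelfAdjoint (b - a)) (hr : IsSelfAdjoint r)
    (hrs : r * r = s) (hs_norm : ‖s‖ ≤ c⁻¹) (ht_norm : ‖t‖ ≤ c⁻¹) :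
    ‖a * t‖ ≤ (‖r * (b - a)‖ / √c + 1) ^ 2 := by
  set e := b - a
  set x := ‖r * e‖
  have hx : 0 ≤ x := norm_nonneg _
  have hr_norm : ‖r‖ ≤ 1 / √c := by
    rw [← pow_le_pow_iff_left₀ (norm_nonneg r) (by positivity) two_ne_zero, ← hr.norm_mul_self,
      hrs, div_pow, one_pow, Real.sq_sqrt hc.le, one_div]
    exact hs_norm
  have hes : ‖e * s‖ ≤ x / √c :=
    calc ‖e * s‖ = ‖e * r * r‖ := by rw [← hrs, mul_assoc]
      _ ≤ ‖e * r‖ * ‖r‖ := norm_mul_le _ _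
      _ = x * ‖r‖ := by rw [hba.norm_mul_comm hr]
      _ ≤ x * (1 / √c) := by gcongr
      _ = x / √c := by ring
  have hese : ‖e * s * e * t‖ ≤ x ^ 2 / c :=
    calc ‖e * s * e * t‖ = ‖e * r * (r * e) * t‖ := by rw [← hrs]; noncomm_ring
      _ ≤ ‖e * r‖ * ‖r * e‖ * ‖t‖ := norm_mul₃_le
      _ ≤ x * x * c⁻¹ := by rw [hba.norm_mul_comm hr]; gcongr
      _ = x ^ 2 / c := by ring
  calc ‖a * t‖ = ‖e * s * e * t - e * s + 1‖ := by rw [mul_eq_sub_mul_sub_add_one hs ht]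
    _ ≤ x ^ 2 / c + x / √c + 1 :=
      (norm_add_le _ _).trans (add_le_add (norm_sub_le_of_le hese hes) CStarRing.norm_one_le_one)
    _ ≤ (x / √c + 1) ^ 2 := by
      rw [add_sq, div_pow, Real.sq_sqrt hc.le]
      linarith [div_nonneg hx (Real.sqrt_nonneg c)]

end CStarRing

section InnerProductSpace

variable {H : Type*} [NormedAddCommGroup H] [InnerProductSpace ℝ H]

lemma norm_le_inv_of_coercive_of_mul_eq_one {B S : H →L[ℝ] H} {c : ℝ} (hc : 0 < c)
    (hB : ∀ x, c * ‖x‖ ^ 2 ≤ ⟪B x, x⟫) (h : B * S = 1) : ‖S‖ ≤ c⁻¹ := by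
  refine ContinuousLinearMap.opNorm_le_bound _ (by positivity) fun y => ?_
  have hBS : B (S y) = y := by simpa using congr($h y)
  have : c * ‖S y‖ * ‖S y‖ ≤ ‖y‖ * ‖S y‖ :=
    calc c * ‖S y‖ * ‖S y‖ = c * ‖S y‖ ^ 2 := by ring
      _ ≤ ⟪B (S y), S y⟫ := hB _
      _ ≤ ‖y‖ * ‖S y‖ := by rw [hBS]; exact real_inner_le_norm _ _
  rcases (norm_nonneg (S y)).eq_or_lt with h0 | h0
  · rw [← h0]; positivity
  · rw [inv_mul_eq_div, le_div_iff₀' hc]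
    exact le_of_mul_le_mul_right this h0

lemma norm_le_inv_of_add_smul_one_mul_eq_one {T S : H →L[ℝ] H} {c : ℝ} (hc : 0 < c)
    (hT : ∀ x, 0 ≤ ⟪T x, x⟫) (h : (T + c • 1) * S = 1) : ‖S‖ ≤ c⁻¹ := by
  refine norm_le_inv_of_coercive_of_mul_eq_one hc (fun x => ?_) h
  have : ⟪(T + c • 1) x, x⟫ = ⟪T x, x⟫ + c * ‖x‖ ^ 2 := by
    simp [inner_add_left, real_inner_smul_left]
  linarith [hT x]

end InnerProductSpace

theorem stmt6_general {H : Type*} [NormedAddCommGroup H] [InnerProductSpace ℝ H] [CompleteSpace H]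
    (T Tn S Sn R : H →L[ℝ] H)
    (hT : IsSelfAdjoint T) (hTpos : ∀ x : H, 0 ≤ ⟪T x, x⟫)
    (hTn : IsSelfAdjoint Tn) (hTnpos : ∀ x : H, 0 ≤ ⟪Tn x, x⟫)
    (lam : ℝ) (hlam : 0 < lam)
    (hS₁ : S * (T + lam • 1) = 1) (hS₂ : (T + lam • 1) * S = 1)
    (hSn₂ : (Tn + lam • 1) * Sn = 1)
    (hR : IsSelfAdjoint R) (hRS : R * R = S) :
    ‖(T + lam • 1) * Sn‖ ≤ (‖R * (Tn - T)‖ / Real.sqrt lam + 1) ^ 2 := by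
  have hdiff : (Tn + lam • 1) - (T + lam • 1) = Tn - T := add_sub_add_right_eq_sub _ _ _
  have h := norm_mul_le_sq_of_mul_eq_one hlam hS₁ hSn₂ (hdiff ▸ hTn.sub hT) hR hRS
    (norm_le_inv_of_add_smul_one_mul_eq_one hlam hTpos hS₂)
    (norm_le_inv_of_add_smul_one_mul_eq_one hlam hTnpos hSn₂)
  rwa [hdiff] at h

/-- For positive self-adjoint bounded operators `T, Tₙ` on a Hilbert space and `λ > 0`,
with `Sₙ = (Tₙ + λI)⁻¹` and `R = (T + λI)^{-1/2}` (positive self-adjoint square root of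
`(T + λI)⁻¹`): `‖(T + λI)(Tₙ + λI)⁻¹‖ ≤ (λ^{-1/2} ‖(T + λI)^{-1/2}(Tₙ − T)‖ + 1)²`. -/
theorem stmt6 {H : Type*} [NormedAddCommGroup H] [InnerProductSpace ℝ H] [CompleteSpace H]
    (T Tn S Sn R : H →L[ℝ] H)
    (hT : IsSelfAdjoint T) (hTpos : ∀ x : H, 0 ≤ ⟪T x, x⟫)
    (hTn : IsSelfAdjoint Tn) (hTnpos : ∀ x : H, 0 ≤ ⟪Tn x, x⟫)
    (lam : ℝ) (hlam : 0 < lam)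
    (hS₁ : S * (T + lam • 1) = 1) (hS₂ : (T + lam • 1) * S = 1)
    (hSn₁ : Sn * (Tn + lam • 1) = 1) (hSn₂ : (Tn + lam • 1) * Sn = 1)
    (hR : IsSelfAdjoint R) (hRpos : ∀ x : H, 0 ≤ ⟪R x, x⟫) (hRS : R * R = S) :
    ‖(T + lam • 1) * Sn‖ ≤ (‖R * (Tn - T)‖ / Real.sqrt lam + 1) ^ 2 :=
  stmt6_general T Tn S Sn R hT hTpos hTn hTnpos lam hlam hS₁ hS₂ hSn₂ hR hRS
end

section
/- For any integer M ≥ 8 there exist vectors θ⁰, θ¹, …, θ^N ∈ {0,1}^M such that θ⁰ = (0,…,0), the Hamming distance H(θ^i, θ^j) > M/8 for all i ≠ j, and N ≥ 2^{M/8}. -/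
/-! Gilbert's greedy bound: a maximal code in `{0,1}^M` with minimum distance `> M/8` containing
`0` covers the cube by Hamming balls of radius `M/8`, so it has at least `2^M / V` words, where
`V = ∑_{k ≤ M/8} (M choose k)`. Comparing `V · 7^{M - M/8} ≤ 8^M` (binomial theorem) with
`2^19 ≤ 7^7` gives `V · 2^{M/8 + 2} ≤ 2^M`. -/

open Finset

section HammingCode

variable {ι : Type*} [Fintype ι]

theorem card_hammingBall_bool_le [DecidableEq ι] (c : ι → Bool) (r : ℕ) :
    #{x | hammingDist c x ≤ r} ≤ ∑ k ∈ range (r + 1), (Fintype.card ι).choose k := by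
  set lightSets := (range (r + 1)).biUnion fun k => powersetCard k (univ : Finset ι)
  have hlightSets : #lightSets ≤ ∑ k ∈ range (r + 1), (Fintype.card ι).choose k :=
    card_biUnion_le.trans_eq (sum_congr rfl fun k _ => by rw [card_powersetCard, card_univ])
  refine le_trans (card_le_card_of_injOn (t := lightSets) (fun x => {i | c i ≠ x i}) ?_ ?_) hlightSets
  · intro x hx
    rw [mem_coe, mem_filter] at hx
    exact mem_biUnion.mpr ⟨_, mem_range.mpr (Nat.lt_succ_of_le hx.2),
      mem_powersetCard.mpr ⟨subset_univ _, rfl⟩⟩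
  · -- over `Bool`, a word is determined by the set of positions where it differs from `c`
    intro x _ y _ hxy
    funext i
    have hi := congrArg (i ∈ ·) hxy
    simp only [mem_filter, mem_univ, true_and, eq_iff_iff] at hi
    revert hi
    cases c i <;> cases x i <;> cases y i <;> simp

variable {β : ι → Type*} [∀ i, Fintype (β i)] [∀ i, DecidableEq (β i)]

theorem exists_hammingCode_covering (r : ℕ) (z : ∀ i, β i) :
    ∃ C : Finset (∀ i, β i), z ∈ C ∧ (∀ x ∈ C, ∀ y ∈ C, x ≠ y → r < hammingDist x y) ∧
      ∀ x, ∃ c ∈ C, hammingDist c x ≤ r := by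
  classical
  set codes := (univ : Finset (Finset (∀ i, β i))).filter fun C =>
    z ∈ C ∧ ∀ x ∈ C, ∀ y ∈ C, x ≠ y → r < hammingDist x y
  have hsingleton : {z} ∈ codes := by simp [codes]
  obtain ⟨C, hC, hmax⟩ := codes.exists_max_image card ⟨_, hsingleton⟩
  simp only [codes, mem_filter, mem_univ, true_and] at hC
  obtain ⟨hzC, hsep⟩ := hC
  refine ⟨C, hzC, hsep, fun x => ?_⟩
  by_contra! hfar
  have hxC : x ∉ C := fun hx => by simpa using hfar x hx
  have hinsert : insert x C ∈ codes := by
    simp only [codes, mem_filter, mem_univ, true_and, mem_insert]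
    refine ⟨Or.inr hzC, ?_⟩
    rintro a (rfl | ha) b (rfl | hb) hab
    · exact absurd rfl hab
    · rw [hammingDist_comm]; exact hfar b hb
    · exact hfar a ha
    · exact hsep a ha b hb hab
  have := hmax _ hinsert
  rw [card_insert_of_notMem hxC] at this
  omega

end HammingCode

theorem Finset.exists_equiv_fin_succ_zero {α : Type*} {s : Finset α} {z : α} (hz : z ∈ s) :
    ∃ (N : ℕ) (e : Fin (N + 1) ≃ s), e 0 = ⟨z, hz⟩ := by
  obtain ⟨N, hN⟩ := Nat.exists_eq_succ_of_ne_zero (card_ne_zero_of_mem hz)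
  let e₀ : Fin (N + 1) ≃ s := (s.equivFin.trans (finCongr hN)).symm
  exact ⟨N, (Equiv.swap 0 (e₀.symm ⟨z, hz⟩)).trans e₀, by simp⟩

theorem sum_range_choose_mul_pow_le (n r a : ℕ) (hr : r ≤ n) (ha : 1 ≤ a) :
    (∑ k ∈ range (r + 1), n.choose k) * a ^ (n - r) ≤ (1 + a) ^ n :=
  calc (∑ k ∈ range (r + 1), n.choose k) * a ^ (n - r)
      ≤ ∑ k ∈ range (r + 1), a ^ (n - k) * n.choose k := by
        rw [sum_mul]
        refine sum_le_sum fun k hk => ?_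
        rw [mul_comm]
        exact Nat.mul_le_mul_right _ (Nat.pow_le_pow_right ha (by simp at hk; omega))
    _ ≤ ∑ k ∈ range (n + 1), a ^ (n - k) * n.choose k :=
        sum_le_sum_of_subset (range_subset_range.mpr (by omega))
    _ = (1 + a) ^ n := by simp [add_pow]

theorem two_pow_le_seven_pow {n r : ℕ} (hn : 8 ≤ n) (hr : 8 * r ≤ n) :
    2 ^ (2 * n + r + 2) ≤ 7 ^ (n - r) := by
  rw [← Nat.pow_le_pow_iff_left (by norm_num : 8 ≠ 0), ← pow_mul, ← pow_mul]
  calc 2 ^ ((2 * n + r + 2) * 8) ≤ 2 ^ (19 * n) := Nat.pow_le_pow_right (by norm_num) (by omega)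
    _ = (2 ^ 19) ^ n := by rw [pow_mul]
    _ ≤ (7 ^ 7) ^ n := Nat.pow_le_pow_left (by norm_num) n
    _ = 7 ^ (7 * n) := by rw [pow_mul]
    _ ≤ 7 ^ ((n - r) * 8) := Nat.pow_le_pow_right (by norm_num) (by omega)

theorem sum_range_choose_mul_two_pow_le {n : ℕ} (hn : 8 ≤ n) :
    (∑ k ∈ range (n / 8 + 1), n.choose k) * 2 ^ (n / 8 + 2) ≤ 2 ^ n := by
  set V := ∑ k ∈ range (n / 8 + 1), n.choose k
  have hV : V * 7 ^ (n - n / 8) ≤ 8 ^ n :=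
    sum_range_choose_mul_pow_le n (n / 8) 7 (Nat.div_le_self n 8) (by norm_num)
  refine Nat.le_of_mul_le_mul_right (c := 7 ^ (n - n / 8)) ?_ (by positivity)
  calc V * 2 ^ (n / 8 + 2) * 7 ^ (n - n / 8) = V * 7 ^ (n - n / 8) * 2 ^ (n / 8 + 2) := by ring
    _ ≤ 8 ^ n * 2 ^ (n / 8 + 2) := Nat.mul_le_mul_right _ hV
    _ = 2 ^ n * 2 ^ (2 * n + n / 8 + 2) := by
        rw [show (8 : ℕ) = 2 ^ 3 by norm_num, ← pow_mul, ← pow_add, ← pow_add]; ring_nf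
    _ ≤ 2 ^ n * 7 ^ (n - n / 8) :=
        Nat.mul_le_mul_left _ (two_pow_le_seven_pow hn (Nat.mul_div_le n 8))

/-- Varshamov–Gilbert lemma: for any `M ≥ 8` there exist binary vectors
`θ⁰, …, θᴺ ∈ {0,1}^M` with `θ⁰ = 0`, pairwise Hamming distance `> M/8`, and `N ≥ 2^{M/8}`. -/
theorem stmt15 (M : ℕ) (hM : 8 ≤ M) :
    ∃ (N : ℕ) (θ : Fin (N + 1) → (Fin M → Bool)),
      θ 0 = (fun _ => false) ∧
      (∀ i j : Fin (N + 1), i ≠ j → (M : ℝ) / 8 < hammingDist (θ i) (θ j)) ∧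
      (2 : ℝ) ^ ((M : ℝ) / 8) ≤ N := by
  obtain ⟨C, hzC, hsep, hcover⟩ := exists_hammingCode_covering (M / 8) fun _ : Fin M => false
  set V := ∑ k ∈ range (M / 8 + 1), M.choose k
  have hcovered : 2 ^ M ≤ #C * V :=
    calc 2 ^ M = #(univ : Finset (Fin M → Bool)) := by simp
      _ ≤ #(C.biUnion fun c => {x | hammingDist c x ≤ M / 8}) :=
          card_le_card fun x _ => by simpa using hcover x
      _ ≤ #C * V := card_biUnion_le_card_mul _ _ _ fun c _ => by
          simpa using card_hammingBall_bool_le c (M / 8)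
  have hC : 2 ^ (M / 8 + 2) ≤ #C :=
    Nat.le_of_mul_le_mul_left ((sum_range_choose_mul_two_pow_le hM).trans hcovered |>.trans_eq
      (mul_comm _ _)) (sum_pos' (fun _ _ => Nat.zero_le _) ⟨0, by simp, by simp⟩)
  obtain ⟨N, e, he⟩ := exists_equiv_fin_succ_zero hzC
  have hN : N + 1 = #C := by simpa using Fintype.card_congr e
  have hdiv : (M : ℝ) / 8 < (M / 8 : ℕ) + 1 := by
    have hfloor : ⌊(M : ℝ) / 8⌋₊ = M / 8 := by exact_mod_cast Nat.floor_div_eq_div (K := ℝ) M 8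
    simpa [hfloor] using Nat.lt_floor_add_one ((M : ℝ) / 8)
  refine ⟨N, fun i => e i, congrArg Subtype.val he, fun i j hij => ?_, ?_⟩
  · have := hsep _ (e i).2 _ (e j).2 (Subtype.val_injective.ne (e.injective.ne hij))
    exact hdiv.trans_le (by exact_mod_cast this)
  · have : 2 ^ (M / 8 + 1) ≤ N := by rw [pow_succ] at hC; omega
    calc (2 : ℝ) ^ ((M : ℝ) / 8) ≤ 2 ^ ((M / 8 + 1 : ℕ) : ℝ) :=
          Real.rpow_le_rpow_of_exponent_le (by norm_num) (by exact_mod_cast hdiv.le)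
      _ ≤ N := by rw [Real.rpow_natCast]; exact_mod_cast this
end
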